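/- Let data points (x^ℓ, y_ℓ) ∈ ℝ^d × ℝ, ℓ = 1,…,N, be given, let k₁, k₂ ≥ 1, and for Θ = ((aⁱ, αᵢ)_{i=1}^{k₁}, (bʲ, βⱼ)_{j=1}^{k₂}) ∈ ℝ^{(k₁+k₂)(d+1)} define f(Θ) = (1/(2N)) Σ_{ℓ=1}^{N} ( y_ℓ − [ max_{1≤i≤k₁}((aⁱ)ᵀx^ℓ + αᵢ) − max_{1≤j≤k₂}((bʲ)ᵀx^ℓ + βⱼ) ] )². Then for any polyhedral set X ⊆ ℝ^{(k₁+k₂)(d+1)}, the set of d-stationary values f(D_{(f,X)}) of f on X is finite. -/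

import Mathlib

open Matrix Filter

noncomputable def finMax {k : ℕ} (hk : 0 < k) (g : Fin k → ℝ) : ℝ :=
  Finset.univ.sup' (Finset.univ_nonempty_iff.mpr ⟨⟨0, hk⟩⟩) g

/-- The parameter space `Θ = ((aⁱ, αᵢ)_{i=1}^{k₁}, (bʲ, βⱼ)_{j=1}^{k₂})`, a copy of
`ℝ^{(k₁+k₂)(d+1)}`. -/
abbrev RegSpace (d k₁ k₂ : ℕ) := (Fin k₁ → (Fin d → ℝ) × ℝ) × (Fin k₂ → (Fin d → ℝ) × ℝ)

/-- The least-squares piecewise affine regression objective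
`f(Θ) = (1/(2N)) Σ_ℓ (y_ℓ − [maxᵢ((aⁱ)ᵀxℓ + αᵢ) − maxⱼ((bʲ)ᵀxℓ + βⱼ)])²`. -/
noncomputable def regObj {d N k₁ k₂ : ℕ} (hk₁ : 0 < k₁) (hk₂ : 0 < k₂)
    (x : Fin N → Fin d → ℝ) (y : Fin N → ℝ) (Θ : RegSpace d k₁ k₂) : ℝ :=
  (1 / (2 * (N : ℝ))) * ∑ ℓ : Fin N, (y ℓ -
      (finMax hk₁ (fun i => (Θ.1 i).1 ⬝ᵥ x ℓ + (Θ.1 i).2) -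
       finMax hk₂ (fun j => (Θ.2 j).1 ⬝ᵥ x ℓ + (Θ.2 j).2))) ^ 2

/-- A polyhedral subset of a real normed space: the solution set of finitely many
continuous linear inequalities. -/
def IsPolyhedralE {E : Type*} [NormedAddCommGroup E] [NormedSpace ℝ E] (X : Set E) : Prop :=
  ∃ (m : ℕ) (L : Fin m → E →L[ℝ] ℝ) (b : Fin m → ℝ), X = {θ | ∀ i, L i θ ≤ b i}

/-- The one-sided directional derivative of `f` at `x` in direction `v` equals `L`. -/
def HasDirDerivE {E : Type*} [NormedAddCommGroup E] [NormedSpace ℝ E]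
    (f : E → ℝ) (x v : E) (L : ℝ) : Prop :=
  Filter.Tendsto (fun δ : ℝ => (f (x + δ • v) - f x) / δ) (nhdsWithin 0 (Set.Ioi 0)) (nhds L)

/-- `x₀` is a d(irectional)-stationary point of `f` on `X`. -/
def DStatE {E : Type*} [NormedAddCommGroup E] [NormedSpace ℝ E]
    (f : E → ℝ) (X : Set E) (x₀ : E) : Prop :=
  x₀ ∈ X ∧ ∀ x ∈ X, ∃ L, HasDirDerivE f x₀ (x - x₀) L ∧ 0 ≤ L

/-!
For each choice `σ` of an active affine piece in both max-terms at every data point, the region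
where `σ` is active is a polyhedral cone, and on it the objective coincides with a convex
least-squares function. Along the segment from a d-stationary point `Θ` to any other point of
`X` in the same region, the objective is convex, so its difference quotients dominate the
directional derivative, which is nonnegative; hence `Θ` minimises the objective over `X` within
the region. All d-stationary points of one region therefore share one value, and there are only
finitely many regions.
-/

open Set

section DStationary

variable {E : Type*} [NormedAddCommGroup E] [NormedSpace ℝ E] {f : E → ℝ} {S : Set E}

theorem HasDirDerivE.le_sub_of_convexOn (hf : ConvexOn ℝ S f) {a b : E} (ha : a ∈ S)
    (hb : b ∈ S) {L : ℝ} (hL : HasDirDerivE f a (b - a) L) : L ≤ f b - f a := by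
  refine le_of_tendsto hL ?_
  filter_upwards [Ioc_mem_nhdsGT one_pos] with δ ⟨hδ0, hδ1⟩
  have hseg : a + δ • (b - a) = (1 - δ) • a + δ • b := by module
  have hconv := hf.2 ha hb (sub_nonneg.2 hδ1) hδ0.le (sub_add_cancel 1 δ)
  simp only [smul_eq_mul] at hconv
  rw [hseg, div_le_iff₀ hδ0]
  linarith

theorem DStatE.le_of_convexOn {X : Set E} {a b : E} (ha : DStatE f X a) (hf : ConvexOn ℝ S f)
    (haS : a ∈ S) (hbS : b ∈ S) (hbX : b ∈ X) : f a ≤ f b := by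
  obtain ⟨L, hL, hL0⟩ := ha.2 b hbX
  linarith [hL.le_sub_of_convexOn hf haS hbS]

theorem finite_image_dStatE_of_convexOn_cover {ι : Type*} [Finite ι] (X : Set E)
    (S : ι → Set E) (hcover : ∀ θ, ∃ i, θ ∈ S i) (hf : ∀ i, ConvexOn ℝ (S i) f) :
    (f '' {θ | DStatE f X θ}).Finite := by
  have hsub : f '' {θ | DStatE f X θ} ⊆ ⋃ i, f '' ({θ | DStatE f X θ} ∩ S i) := by
    rintro _ ⟨θ, hθ, rfl⟩
    obtain ⟨i, hi⟩ := hcover θ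
    exact mem_iUnion.2 ⟨i, θ, ⟨hθ, hi⟩, rfl⟩
  refine (finite_iUnion fun i => Subsingleton.finite ?_).subset hsub
  rintro _ ⟨a, ⟨ha, haS⟩, rfl⟩ _ ⟨b, ⟨hb, hbS⟩, rfl⟩
  exact le_antisymm (ha.le_of_convexOn (hf i) haS hbS hb.1)
    (hb.le_of_convexOn (hf i) hbS haS ha.1)

end DStationary

noncomputable def leastSquaresObj {E : Type*} [AddCommGroup E] [Module ℝ E] {N : ℕ}
    (y : Fin N → ℝ) (r : Fin N → E →ₗ[ℝ] ℝ) (θ : E) : ℝ :=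
  (1 / (2 * (N : ℝ))) * ∑ ℓ, (y ℓ - r ℓ θ) ^ 2

theorem convexOn_leastSquaresObj {E : Type*} [AddCommGroup E] [Module ℝ E] {N : ℕ}
    (y : Fin N → ℝ) (r : Fin N → E →ₗ[ℝ] ℝ) : ConvexOn ℝ univ (leastSquaresObj y r) := by
  have hterm (ℓ : Fin N) : ConvexOn ℝ univ fun θ => (y ℓ - r ℓ θ) ^ 2 :=
    even_two.convexOn_pow.comp_affineMap (AffineMap.const ℝ E (y ℓ) - (r ℓ).toAffineMap)
  have hsum : ConvexOn ℝ univ fun θ => ∑ ℓ, (y ℓ - r ℓ θ) ^ 2 := by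
    simpa only [Finset.sum_fn] using Finset.sum_induction _ (ConvexOn ℝ univ)
      (fun _ _ => ConvexOn.add) (convexOn_const 0 convex_univ) fun ℓ _ => hterm ℓ
  exact hsum.smul (by positivity)

theorem finMax_eq_of_forall_le {k : ℕ} (hk : 0 < k) {g : Fin k → ℝ} {i₀ : Fin k}
    (h : ∀ i, g i ≤ g i₀) : finMax hk g = g i₀ :=
  le_antisymm (Finset.sup'_le _ _ fun i _ => h i) (Finset.le_sup' g (Finset.mem_univ i₀))

section Regression

variable {d N k₁ k₂ : ℕ}

noncomputable def affineEval (v : Fin d → ℝ) : (Fin d → ℝ) × ℝ →ₗ[ℝ] ℝ :=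
  ((dotProductBilin ℝ ℝ).flip v).coprod LinearMap.id

theorem affineEval_apply (v : Fin d → ℝ) (p : (Fin d → ℝ) × ℝ) :
    affineEval v p = p.1 ⬝ᵥ v + p.2 :=
  rfl

def activeRegion (x : Fin N → Fin d → ℝ) (σ : Fin N → Fin k₁ × Fin k₂) :
    Set (RegSpace d k₁ k₂) :=
  {Θ | ∀ ℓ, (∀ i, affineEval (x ℓ) (Θ.1 i) ≤ affineEval (x ℓ) (Θ.1 (σ ℓ).1)) ∧
    ∀ j, affineEval (x ℓ) (Θ.2 j) ≤ affineEval (x ℓ) (Θ.2 (σ ℓ).2)}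

noncomputable def activeFit (x : Fin N → Fin d → ℝ) (σ : Fin N → Fin k₁ × Fin k₂)
    (ℓ : Fin N) : RegSpace d k₁ k₂ →ₗ[ℝ] ℝ :=
  affineEval (x ℓ) ∘ₗ LinearMap.proj (σ ℓ).1 ∘ₗ LinearMap.fst ℝ _ _ -
    affineEval (x ℓ) ∘ₗ LinearMap.proj (σ ℓ).2 ∘ₗ LinearMap.snd ℝ _ _

theorem exists_mem_activeRegion (x : Fin N → Fin d → ℝ) (hk₁ : 0 < k₁) (hk₂ : 0 < k₂)
    (Θ : RegSpace d k₁ k₂) : ∃ σ, Θ ∈ activeRegion x σ := by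
  have : Nonempty (Fin k₁) := Fin.pos_iff_nonempty.1 hk₁
  have : Nonempty (Fin k₂) := Fin.pos_iff_nonempty.1 hk₂
  choose i hi using fun ℓ => Finite.exists_max fun i => affineEval (x ℓ) (Θ.1 i)
  choose j hj using fun ℓ => Finite.exists_max fun j => affineEval (x ℓ) (Θ.2 j)
  exact ⟨fun ℓ => (i ℓ, j ℓ), fun ℓ => ⟨hi ℓ, hj ℓ⟩⟩

theorem convex_activeRegion (x : Fin N → Fin d → ℝ) (σ : Fin N → Fin k₁ × Fin k₂) :
    Convex ℝ (activeRegion x σ) := by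
  intro Θ hΘ Φ hΦ a b ha hb _ ℓ
  simp only [Prod.fst_add, Prod.snd_add, Prod.smul_fst, Prod.smul_snd, Pi.add_apply,
    Pi.smul_apply, map_add, map_smul, smul_eq_mul]
  exact ⟨fun i => add_le_add (mul_le_mul_of_nonneg_left ((hΘ ℓ).1 i) ha)
      (mul_le_mul_of_nonneg_left ((hΦ ℓ).1 i) hb),
    fun j => add_le_add (mul_le_mul_of_nonneg_left ((hΘ ℓ).2 j) ha)
      (mul_le_mul_of_nonneg_left ((hΦ ℓ).2 j) hb)⟩

theorem regObj_eqOn_activeRegion (hk₁ : 0 < k₁) (hk₂ : 0 < k₂) (x : Fin N → Fin d → ℝ)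
    (y : Fin N → ℝ) (σ : Fin N → Fin k₁ × Fin k₂) :
    EqOn (leastSquaresObj y (activeFit x σ)) (regObj hk₁ hk₂ x y) (activeRegion x σ) := by
  intro Θ hΘ
  simp only [regObj, leastSquaresObj, ← affineEval_apply,
    finMax_eq_of_forall_le hk₁ (hΘ _).1, finMax_eq_of_forall_le hk₂ (hΘ _).2]
  rfl

theorem convexOn_regObj_activeRegion (hk₁ : 0 < k₁) (hk₂ : 0 < k₂) (x : Fin N → Fin d → ℝ)
    (y : Fin N → ℝ) (σ : Fin N → Fin k₁ × Fin k₂) :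
    ConvexOn ℝ (activeRegion x σ) (regObj hk₁ hk₂ x y) :=
  ((convexOn_leastSquaresObj y (activeFit x σ)).subset (subset_univ _)
    (convex_activeRegion x σ)).congr (regObj_eqOn_activeRegion hk₁ hk₂ x y σ)

end Regression

theorem stmt_18_general {d N k₁ k₂ : ℕ} (hk₁ : 0 < k₁) (hk₂ : 0 < k₂)
    (x : Fin N → Fin d → ℝ) (y : Fin N → ℝ)
    (X : Set (RegSpace d k₁ k₂)) :
    (regObj hk₁ hk₂ x y '' {Θ | DStatE (regObj hk₁ hk₂ x y) X Θ}).Finite :=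
  finite_image_dStatE_of_convexOn_cover X (activeRegion x) (exists_mem_activeRegion x hk₁ hk₂)
    (convexOn_regObj_activeRegion hk₁ hk₂ x y)

/-- Proposition 16(b): the least-squares piecewise affine regression objective has only
finitely many d-stationary values on any polyhedral set `X`. -/
theorem stmt_18 {d N k₁ k₂ : ℕ} (hN : 0 < N) (hk₁ : 0 < k₁) (hk₂ : 0 < k₂)
    (x : Fin N → Fin d → ℝ) (y : Fin N → ℝ)
    (X : Set (RegSpace d k₁ k₂)) (hX : IsPolyhedralE X) :
    (regObj hk₁ hk₂ x y '' {Θ | DStatE (regObj hk₁ hk₂ x y) X Θ}).Finite :=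
  stmt_18_general hk₁ hk₂ x y X
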